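/- Let H be a pre-Hilbert space over C[[λ]] (C = R[i], R ordered). Then H₀ = {φ ∈ H : ⟨φ,φ⟩|_{λ=0} = 0} is a C[[λ]]-submodule of H, and the quotient H/H₀ becomes a pre-Hilbert space over C with inner product ⟨[φ],[ψ]⟩ := ⟨φ,ψ⟩|_{λ=0} (this is well-defined and positive-definite). -/

import Mathlib

/-!
If `⟨φ, φ⟩|_{λ=0} = 0` then `⟨φ, ψ⟩|_{λ=0} = 0` for every `ψ`: otherwise, with `c = ⟨φ, ψ⟩|_{λ=0}`,
`b = ⟨ψ, ψ⟩|_{λ=0}` and `m = |c|² > 0`, the vector `v = -(b + m) c • φ + m • ψ` has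
`⟨v, v⟩|_{λ=0} = -m² (b + 2m) < 0`, although the zeroth coefficient of `⟨v, v⟩` is `≥ 0` by positivity
of the inner product in `R[[λ]]`. Hence the null vectors form a submodule, and the zeroth-order inner
product descends to the quotient, where it is positive definite by construction.
-/


/-- An ordered ring in the sense of the paper. -/
structure PosCone (R : Type) [CommRing R] (P : Set R) : Prop where
  trichotomy : ∀ a : R, a ∈ P ∨ a = 0 ∨ -a ∈ P
  zero_not_mem : (0 : R) ∉ P
  not_neg_mem : ∀ a : R, a ∈ P → -a ∉ P
  add_mem : ∀ a b : R, a ∈ P → b ∈ P → a + b ∈ P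
  mul_mem : ∀ a b : R, a ∈ P → b ∈ P → a * b ∈ P

/-- The ring `C = R[i] = R(i)` obtained from `R` by adjoining a square root
of `-1`: elements are formal combinations `a + i b`. -/
@[ext] structure Cx (R : Type) : Type where
  re : R
  im : R

namespace Cx
variable {R : Type} [CommRing R]

instance : Zero (Cx R) := ⟨⟨0, 0⟩⟩
instance : One (Cx R) := ⟨⟨1, 0⟩⟩
instance : Add (Cx R) := ⟨fun z w => ⟨z.re + w.re, z.im + w.im⟩⟩
instance : Neg (Cx R) := ⟨fun z => ⟨-z.re, -z.im⟩⟩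
instance : Mul (Cx R) := ⟨fun z w => ⟨z.re * w.re - z.im * w.im, z.re * w.im + z.im * w.re⟩⟩

@[simp] theorem zero_re : (0 : Cx R).re = 0 := rfl
@[simp] theorem zero_im : (0 : Cx R).im = 0 := rfl
@[simp] theorem one_re : (1 : Cx R).re = 1 := rfl
@[simp] theorem one_im : (1 : Cx R).im = 0 := rfl
@[simp] theorem add_re (z w : Cx R) : (z + w).re = z.re + w.re := rfl
@[simp] theorem add_im (z w : Cx R) : (z + w).im = z.im + w.im := rfl
@[simp] theorem neg_re (z : Cx R) : (-z).re = -z.re := rfl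
@[simp] theorem neg_im (z : Cx R) : (-z).im = -z.im := rfl
@[simp] theorem mul_re (z w : Cx R) : (z * w).re = z.re * w.re - z.im * w.im := rfl
@[simp] theorem mul_im (z w : Cx R) : (z * w).im = z.re * w.im + z.im * w.re := rfl

instance : CommRing (Cx R) where
  add_assoc a b c := by ext <;> simp <;> ring
  zero_add a := by ext <;> simp
  add_zero a := by ext <;> simp
  add_comm a b := by ext <;> simp <;> ring
  left_distrib a b c := by ext <;> simp <;> ring
  right_distrib a b c := by ext <;> simp <;> ring
  zero_mul a := by ext <;> simp
  mul_zero a := by ext <;> simp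
  mul_assoc a b c := by ext <;> simp <;> ring
  one_mul a := by ext <;> simp
  mul_one a := by ext <;> simp
  neg_add_cancel a := by ext <;> simp
  mul_comm a b := by ext <;> simp <;> ring
  nsmul := nsmulRec
  zsmul := zsmulRec

/-- Complex conjugation `a + ib ↦ a - ib` on `C = R[i]`. -/
def conj (z : Cx R) : Cx R := ⟨z.re, -z.im⟩

/-- The imaginary unit `i` of `C = R[i]`. -/
def I : Cx R := ⟨0, 1⟩

end Cx

/-- The positive elements of `C = R[i]`: the elements of `P ⊆ R ⊆ C`. -/
def CxPos {R : Type} [CommRing R] (P : Set R) : Set (Cx R) :=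
  {z | z.im = 0 ∧ z.re ∈ P}

/-- The nonnegative elements of `C = R[i]`: elements of `P ∪ {0} ⊆ R ⊆ C`. -/
def CxNonneg {R : Type} [CommRing R] (P : Set R) : Set (Cx R) :=
  {z | z.im = 0 ∧ (z.re = 0 ∨ z.re ∈ P)}

/-- A pre-Hilbert space over `K` (with conjugation `conj` and positivity set
`Pos`): a `K`-module with a Hermitian, positive-definite inner product which
is `K`-linear in the second argument. -/
structure PreHilbert (K : Type) [CommRing K] (conj : K → K) (Pos : Set K)
    (H : Type) [AddCommGroup H] [Module K H] : Type where
  inner : H → H → K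
  inner_add_right : ∀ φ ψ χ : H, inner φ (ψ + χ) = inner φ ψ + inner φ χ
  inner_smul_right : ∀ (z : K) (φ ψ : H), inner φ (z • ψ) = z * inner φ ψ
  inner_conj : ∀ φ ψ : H, inner φ ψ = conj (inner ψ φ)
  inner_pos : ∀ φ : H, φ ≠ 0 → inner φ φ ∈ Pos

/-- Coefficientwise complex conjugation on `C[[λ]]`. -/
noncomputable def psConj {R : Type} [CommRing R] (f : PowerSeries (Cx R)) :
    PowerSeries (Cx R) :=
  PowerSeries.mk fun n => Cx.conj (PowerSeries.coeff n f)

/-- The positive elements of `C[[λ]] = (R[[λ]])[i]`: the elements of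
`R[[λ]]` (all imaginary parts vanish) whose lowest nonvanishing coefficient
is positive. -/
def PSPos {R : Type} [CommRing R] (P : Set R) : Set (PowerSeries (Cx R)) :=
  {f | (∀ m : ℕ, (PowerSeries.coeff m f).im = 0) ∧
    ∃ n : ℕ, (∀ m < n, (PowerSeries.coeff m f).re = 0) ∧
      (PowerSeries.coeff n f).re ∈ P}

namespace Cx

variable {R : Type} [CommRing R]

@[simp] theorem conj_re (z : Cx R) : (conj z).re = z.re := rfl
@[simp] theorem conj_im (z : Cx R) : (conj z).im = -z.im := rfl

@[simp] theorem conj_zero : conj (0 : Cx R) = 0 := by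
  ext <;> simp

@[simp] theorem conj_add (z w : Cx R) : conj (z + w) = conj z + conj w := by
  ext
  · simp
  · simp; ring

@[simp] theorem conj_neg (z : Cx R) : conj (-z) = -conj z := by
  ext <;> simp

@[simp] theorem conj_mul (z w : Cx R) : conj (z * w) = conj z * conj w := by
  ext
  · simp
  · simp; ring

@[simp] theorem conj_conj (z : Cx R) : conj (conj z) = z := by
  ext <;> simp

theorem conj_eq_self_of_mem_cxNonneg {P : Set R} {z : Cx R} (hz : z ∈ CxNonneg P) :
    conj z = z := by
  ext <;> simp [hz.1]

end Cx

section Positivity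

variable {R : Type} [CommRing R] {P : Set R}

theorem mem_cxNonneg_of_mem_cxPos {z : Cx R} (hz : z ∈ CxPos P) : z ∈ CxNonneg P :=
  ⟨hz.1, Or.inr hz.2⟩

theorem mem_cxPos_of_mem_cxNonneg {z : Cx R} (hz : z ∈ CxNonneg P) (h0 : z ≠ 0) :
    z ∈ CxPos P := by
  obtain ⟨him, hre | hre⟩ := hz
  · exact absurd (Cx.ext hre him) h0
  · exact ⟨him, hre⟩

namespace PosCone

variable (hP : PosCone R P)
include hP

theorem mul_self_mem {a : R} (ha : a ≠ 0) : a * a ∈ P := by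
  rcases hP.trichotomy a with h | h | h
  · exact hP.mul_mem a a h h
  · exact absurd h ha
  · simpa using hP.mul_mem (-a) (-a) h h

theorem conj_mul_self_mem_cxPos {z : Cx R} (hz : z ≠ 0) : Cx.conj z * z ∈ CxPos P := by
  refine ⟨by simp [mul_comm], ?_⟩
  have hnorm : (Cx.conj z * z).re = z.re * z.re + z.im * z.im := by simp
  rw [hnorm]
  by_cases hre : z.re = 0
  · have him : z.im ≠ 0 := fun him => hz (Cx.ext hre him)
    simpa [hre] using hP.mul_self_mem him
  by_cases him : z.im = 0
  · simpa [him] using hP.mul_self_mem hre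
  exact hP.add_mem _ _ (hP.mul_self_mem hre) (hP.mul_self_mem him)

theorem mul_mem_cxPos {z w : Cx R} (hz : z ∈ CxPos P) (hw : w ∈ CxPos P) :
    z * w ∈ CxPos P :=
  ⟨by simp [hz.1, hw.1], by simpa [hz.1, hw.1] using hP.mul_mem _ _ hz.2 hw.2⟩

theorem add_mem_cxPos {z w : Cx R} (hz : z ∈ CxNonneg P) (hw : w ∈ CxPos P) :
    z + w ∈ CxPos P := by
  obtain ⟨hzim, hzre | hzre⟩ := hz
  · exact ⟨by simp [hzim, hw.1], by simpa [hzre] using hw.2⟩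
  · exact ⟨by simp [hzim, hw.1], hP.add_mem _ _ hzre hw.2⟩

theorem neg_not_mem_cxNonneg {z : Cx R} (hz : z ∈ CxPos P) : -z ∉ CxNonneg P := by
  rintro ⟨-, hre | hre⟩
  · exact hP.zero_not_mem (by simpa [neg_eq_zero.mp hre] using hz.2)
  · exact hP.not_neg_mem _ hz.2 hre

end PosCone

end Positivity

namespace PreHilbert

theorem inner_zero_right {K : Type} [CommRing K] {conj : K → K} {Pos : Set K} {H : Type}
    [AddCommGroup H] [Module K H] (hp : PreHilbert K conj Pos H) (φ : H) :
    hp.inner φ 0 = 0 := by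
  simpa using hp.inner_add_right φ 0 0

variable {R : Type} [CommRing R] {P : Set R} {H : Type} [AddCommGroup H]
  [Module (PowerSeries (Cx R)) H] (hp : PreHilbert (PowerSeries (Cx R)) psConj (PSPos P) H)

/-- The classical limit `⟨φ, ψ⟩|_{λ=0}` of the inner product. -/
noncomputable def inner₀ (φ ψ : H) : Cx R :=
  PowerSeries.coeff 0 (hp.inner φ ψ)

theorem inner₀_conj (φ ψ : H) : hp.inner₀ φ ψ = Cx.conj (hp.inner₀ ψ φ) := by
  rw [inner₀, hp.inner_conj, psConj, PowerSeries.coeff_mk, inner₀]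

theorem inner₀_add_right (φ ψ χ : H) :
    hp.inner₀ φ (ψ + χ) = hp.inner₀ φ ψ + hp.inner₀ φ χ := by
  rw [inner₀, hp.inner_add_right, map_add, inner₀, inner₀]

theorem inner₀_add_left (φ ψ χ : H) :
    hp.inner₀ (φ + ψ) χ = hp.inner₀ φ χ + hp.inner₀ ψ χ := by
  rw [inner₀_conj, inner₀_add_right, Cx.conj_add, ← inner₀_conj, ← inner₀_conj]

theorem inner₀_smul_right (c : PowerSeries (Cx R)) (φ ψ : H) :
    hp.inner₀ φ (c • ψ) = PowerSeries.constantCoeff c * hp.inner₀ φ ψ := by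
  simp only [inner₀, hp.inner_smul_right, PowerSeries.coeff_zero_eq_constantCoeff_apply, map_mul]

theorem inner₀_smul_left (c : PowerSeries (Cx R)) (φ ψ : H) :
    hp.inner₀ (c • φ) ψ = Cx.conj (PowerSeries.constantCoeff c) * hp.inner₀ φ ψ := by
  rw [inner₀_conj, inner₀_smul_right, Cx.conj_mul, ← inner₀_conj]

theorem inner₀_zero_right (φ : H) : hp.inner₀ φ 0 = 0 := by
  rw [inner₀, hp.inner_zero_right, map_zero]

theorem inner₀_self_mem_cxNonneg (φ : H) : hp.inner₀ φ φ ∈ CxNonneg P := by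
  by_cases hφ : φ = 0
  · simp [hφ, inner₀_zero_right, CxNonneg]
  obtain ⟨him, n, hlow, hn⟩ := hp.inner_pos φ hφ
  refine ⟨him 0, ?_⟩
  rcases Nat.eq_zero_or_pos n with rfl | hn0
  · exact Or.inr hn
  · exact Or.inl (hlow 0 hn0)

variable {hp}

theorem inner₀_eq_zero_of_inner₀_self_eq_zero (hP : PosCone R P) {φ : H}
    (hφ : hp.inner₀ φ φ = 0) (ψ : H) : hp.inner₀ φ ψ = 0 := by
  by_contra hc
  set c := hp.inner₀ φ ψ
  set b := hp.inner₀ ψ ψ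
  set m := Cx.conj c * c with hm_def
  have hb : b ∈ CxNonneg P := hp.inner₀_self_mem_cxNonneg ψ
  have hm : m ∈ CxPos P := hP.conj_mul_self_mem_cxPos hc
  set v := PowerSeries.C (-(b + m) * c) • φ + PowerSeries.C m • ψ
  have hv : hp.inner₀ v v = -(m * m * (b + (m + m))) := by
    simp only [v, inner₀_add_left, inner₀_add_right, inner₀_smul_left, inner₀_smul_right,
      PowerSeries.constantCoeff_C, hφ, hp.inner₀_conj ψ φ, hm_def, Cx.conj_mul, Cx.conj_add,
      Cx.conj_neg, Cx.conj_conj, Cx.conj_eq_self_of_mem_cxNonneg hb]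
    ring
  have hpos : m * m * (b + (m + m)) ∈ CxPos P :=
    hP.mul_mem_cxPos (hP.mul_mem_cxPos hm hm)
      (hP.add_mem_cxPos hb (hP.add_mem_cxPos (mem_cxNonneg_of_mem_cxPos hm) hm))
  exact hP.neg_not_mem_cxNonneg hpos (hv ▸ hp.inner₀_self_mem_cxNonneg v)

variable (hp)

/-- The paper's `H₀`. -/
def nullSubmodule (hP : PosCone R P) : Submodule (PowerSeries (Cx R)) H where
  carrier := {φ | hp.inner₀ φ φ = 0}
  zero_mem' := hp.inner₀_zero_right 0
  add_mem' {φ ψ} hφ hψ := by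
    simp only [Set.mem_ofPred_eq, inner₀_add_left, inner₀_add_right] at hφ hψ ⊢
    rw [hφ, hψ, inner₀_eq_zero_of_inner₀_self_eq_zero hP hφ,
      inner₀_eq_zero_of_inner₀_self_eq_zero hP hψ]
    ring
  smul_mem' c φ hφ := by
    simp only [Set.mem_ofPred_eq, inner₀_smul_left, inner₀_smul_right] at hφ ⊢
    rw [hφ, mul_zero, mul_zero]

theorem inner₀_eq_of_sub_mem_nullSubmodule (hP : PosCone R P) {φ φ' ψ ψ' : H}
    (hφ : φ - φ' ∈ hp.nullSubmodule hP) (hψ : ψ - ψ' ∈ hp.nullSubmodule hP) :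
    hp.inner₀ φ ψ = hp.inner₀ φ' ψ' := by
  have hleft := hp.inner₀_add_left (φ - φ') φ' ψ
  have hright := hp.inner₀_add_right φ' (ψ - ψ') ψ'
  rw [sub_add_cancel, inner₀_eq_zero_of_inner₀_self_eq_zero hP hφ, zero_add] at hleft
  rw [sub_add_cancel, hp.inner₀_conj φ' (ψ - ψ'), inner₀_eq_zero_of_inner₀_self_eq_zero hP hψ,
    Cx.conj_zero, zero_add] at hright
  rw [hleft, hright]

noncomputable def classicalInner (hP : PosCone R P) :
    H ⧸ hp.nullSubmodule hP → H ⧸ hp.nullSubmodule hP → Cx R :=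
  fun x y => Quotient.liftOn₂' x y hp.inner₀ fun _ _ _ _ hφ hψ =>
    hp.inner₀_eq_of_sub_mem_nullSubmodule hP ((Submodule.quotientRel_def _).mp hφ)
      ((Submodule.quotientRel_def _).mp hψ)

variable (hP : PosCone R P)

@[simp] theorem classicalInner_mk (φ ψ : H) :
    hp.classicalInner hP (Submodule.Quotient.mk φ) (Submodule.Quotient.mk ψ) = hp.inner₀ φ ψ :=
  rfl

theorem classicalInner_conj (x y : H ⧸ hp.nullSubmodule hP) :
    hp.classicalInner hP x y = Cx.conj (hp.classicalInner hP y x) := by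
  induction x using Submodule.Quotient.induction_on
  induction y using Submodule.Quotient.induction_on
  exact hp.inner₀_conj _ _

theorem classicalInner_add_right (x y z : H ⧸ hp.nullSubmodule hP) :
    hp.classicalInner hP x (y + z) = hp.classicalInner hP x y + hp.classicalInner hP x z := by
  induction x using Submodule.Quotient.induction_on
  induction y using Submodule.Quotient.induction_on
  induction z using Submodule.Quotient.induction_on
  exact hp.inner₀_add_right _ _ _

theorem classicalInner_smul_right (c : PowerSeries (Cx R)) (x y : H ⧸ hp.nullSubmodule hP) :
    hp.classicalInner hP x (c • y) = PowerSeries.constantCoeff c * hp.classicalInner hP x y := by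
  induction x using Submodule.Quotient.induction_on
  induction y using Submodule.Quotient.induction_on
  exact hp.inner₀_smul_right _ _ _

theorem classicalInner_self_mem_cxPos {x : H ⧸ hp.nullSubmodule hP} (hx : x ≠ 0) :
    hp.classicalInner hP x x ∈ CxPos P := by
  induction x using Submodule.Quotient.induction_on with
  | H φ =>
    exact mem_cxPos_of_mem_cxNonneg (hp.inner₀_self_mem_cxNonneg φ)
      fun h => hx ((Submodule.Quotient.mk_eq_zero _).mpr h)

end PreHilbert

theorem classical_limit_preHilbert_general (R : Type) [CommRing R]
    (P : Set R) (hP : PosCone R P)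
    (H : Type) [AddCommGroup H] [Module (PowerSeries (Cx R)) H]
    (hp : PreHilbert (PowerSeries (Cx R)) psConj (PSPos P) H) :
    ((0 : H) ∈ {φ : H | PowerSeries.coeff 0 (hp.inner φ φ) = 0} ∧
     (∀ φ ψ : H, φ ∈ {φ : H | PowerSeries.coeff 0 (hp.inner φ φ) = 0} →
        ψ ∈ {φ : H | PowerSeries.coeff 0 (hp.inner φ φ) = 0} →
        φ + ψ ∈ {φ : H | PowerSeries.coeff 0 (hp.inner φ φ) = 0}) ∧
     (∀ (c : PowerSeries (Cx R)) (φ : H),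
        φ ∈ {φ : H | PowerSeries.coeff 0 (hp.inner φ φ) = 0} →
        c • φ ∈ {φ : H | PowerSeries.coeff 0 (hp.inner φ φ) = 0})) ∧
    (∀ S : Submodule (PowerSeries (Cx R)) H,
      (S : Set H) = {φ : H | PowerSeries.coeff 0 (hp.inner φ φ) = 0} →
      ∃ inn0 : (H ⧸ S) → (H ⧸ S) → Cx R,
        (∀ φ ψ : H, inn0 (Submodule.Quotient.mk φ) (Submodule.Quotient.mk ψ)
            = PowerSeries.coeff 0 (hp.inner φ ψ)) ∧
        (∀ x y : H ⧸ S, inn0 x y = Cx.conj (inn0 y x)) ∧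
        (∀ x y z : H ⧸ S, inn0 x (y + z) = inn0 x y + inn0 x z) ∧
        (∀ (c : Cx R) (x y : H ⧸ S),
            inn0 x ((PowerSeries.C c) • y) = c * inn0 x y) ∧
        (∀ x : H ⧸ S, x ≠ 0 → inn0 x x ∈ CxPos P)) := by
  let H₀ := hp.nullSubmodule hP
  refine ⟨⟨H₀.zero_mem, fun _ _ => H₀.add_mem, fun c _ => H₀.smul_mem c⟩, fun S hS => ?_⟩
  obtain rfl : S = H₀ := SetLike.coe_injective hS
  refine ⟨hp.classicalInner hP, hp.classicalInner_mk hP, hp.classicalInner_conj hP,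
    hp.classicalInner_add_right hP, fun c x y => ?_, fun _ => hp.classicalInner_self_mem_cxPos hP⟩
  rw [hp.classicalInner_smul_right, PowerSeries.constantCoeff_C]

/-- for a pre-Hilbert space `H` over `C[[λ]]`, the set
`H₀ = {φ | ⟨φ,φ⟩|_{λ=0} = 0}` is a `C[[λ]]`-submodule, and the quotient
`H/H₀` becomes a pre-Hilbert space over `C` with the well-defined
positive-definite Hermitian inner product `⟨[φ],[ψ]⟩ = ⟨φ,ψ⟩|_{λ=0}`. -/
theorem classical_limit_preHilbert (R : Type) [CommRing R] [Nontrivial R]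
    (P : Set R) (hP : PosCone R P)
    (H : Type) [AddCommGroup H] [Module (PowerSeries (Cx R)) H]
    (hp : PreHilbert (PowerSeries (Cx R)) psConj (PSPos P) H) :
    ((0 : H) ∈ {φ : H | PowerSeries.coeff 0 (hp.inner φ φ) = 0} ∧
     (∀ φ ψ : H, φ ∈ {φ : H | PowerSeries.coeff 0 (hp.inner φ φ) = 0} →
        ψ ∈ {φ : H | PowerSeries.coeff 0 (hp.inner φ φ) = 0} →
        φ + ψ ∈ {φ : H | PowerSeries.coeff 0 (hp.inner φ φ) = 0}) ∧
     (∀ (c : PowerSeries (Cx R)) (φ : H),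
        φ ∈ {φ : H | PowerSeries.coeff 0 (hp.inner φ φ) = 0} →
        c • φ ∈ {φ : H | PowerSeries.coeff 0 (hp.inner φ φ) = 0})) ∧
    (∀ S : Submodule (PowerSeries (Cx R)) H,
      (S : Set H) = {φ : H | PowerSeries.coeff 0 (hp.inner φ φ) = 0} →
      ∃ inn0 : (H ⧸ S) → (H ⧸ S) → Cx R,
        (∀ φ ψ : H, inn0 (Submodule.Quotient.mk φ) (Submodule.Quotient.mk ψ)
            = PowerSeries.coeff 0 (hp.inner φ ψ)) ∧
        (∀ x y : H ⧸ S, inn0 x y = Cx.conj (inn0 y x)) ∧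
        (∀ x y z : H ⧸ S, inn0 x (y + z) = inn0 x y + inn0 x z) ∧
        (∀ (c : Cx R) (x y : H ⧸ S),
            inn0 x ((PowerSeries.C c) • y) = c * inn0 x y) ∧
        (∀ x : H ⧸ S, x ≠ 0 → inn0 x x ∈ CxPos P)) :=
  classical_limit_preHilbert_general R P hP H hp
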